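/- Let x₁,…,x_T be vectors in ℝ^d and define V_t = Σ_{s=1}^t x_s x_sᵀ + I. Then Σ_{t=1}^T x_tᵀ V_t⁻¹ x_t ≤ log det(V_T). -/

import Mathlib

/-! Write `V₀ = I` and `Vₜ = Vₜ₋₁ + xₜxₜᵀ`. Applying the matrix determinant lemma to
`Vₜ₋₁ = Vₜ - xₜxₜᵀ` gives `det Vₜ₋₁ = det Vₜ · (1 - xₜᵀVₜ⁻¹xₜ)`, so the `t`-th term equals
`1 - det Vₜ₋₁ / det Vₜ ≤ log det Vₜ - log det Vₜ₋₁` (by `log y ≤ y - 1`), and the sum telescopes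
to `log det V_T`. -/

open Matrix

namespace Matrix

variable {n : Type*} [Fintype n] [DecidableEq n]

theorem det_add_vecMulVec {α : Type*} [CommRing α] {A : Matrix n n α} (hA : IsUnit A.det)
    (u v : n → α) : (A + vecMulVec u v).det = A.det * (1 + v ⬝ᵥ A⁻¹ *ᵥ u) := by
  rw [vecMulVec_eq Unit, det_add_replicateCol_mul_replicateRow hA, Matrix.mul_assoc,
    ← replicateCol_mulVec, det_unique (n := Unit), add_apply, one_apply_eq,
    replicateRow_mul_replicateCol_apply]

theorem posDef_sum_vecMulVec_self_add_one {ι : Type*} (s : Finset ι) (x : ι → n → ℝ) :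
    (∑ i ∈ s, vecMulVec (x i) (x i) + 1).PosDef :=
  PosDef.posSemidef_add (posSemidef_sum s fun i _ => by
    simpa using posSemidef_vecMulVec_self_star (x i)) PosDef.one

namespace PosDef

theorem dotProduct_inv_add_vecMulVec_self_mulVec {A : Matrix n n ℝ} (hA : A.PosDef) (v : n → ℝ) :
    v ⬝ᵥ (A + vecMulVec v v)⁻¹ *ᵥ v = 1 - A.det / (A + vecMulVec v v).det := by
  set B := A + vecMulVec v v
  have hB : 0 < B.det :=
    (hA.add_posSemidef (by simpa using posSemidef_vecMulVec_self_star v)).det_pos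
  have hAB : A.det = B.det * (1 - v ⬝ᵥ B⁻¹ *ᵥ v) := by
    have hA' : A = B + vecMulVec (-v) v := by simp [B, neg_vecMulVec]
    rw [hA', det_add_vecMulVec hB.ne'.isUnit, mulVec_neg, dotProduct_neg, ← sub_eq_add_neg]
  rw [hAB, mul_div_cancel_left₀ _ hB.ne']
  ring

theorem dotProduct_inv_add_vecMulVec_self_mulVec_le {A : Matrix n n ℝ} (hA : A.PosDef)
    (v : n → ℝ) :
    v ⬝ᵥ (A + vecMulVec v v)⁻¹ *ᵥ v ≤
      Real.log (A + vecMulVec v v).det - Real.log A.det := by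
  have hB := (hA.add_posSemidef (by simpa using posSemidef_vecMulVec_self_star v)).det_pos
  have hlog := Real.log_le_sub_one_of_pos (div_pos hA.det_pos hB)
  rw [Real.log_div hA.det_pos.ne' hB.ne'] at hlog
  rw [hA.dotProduct_inv_add_vecMulVec_self_mulVec]
  linarith

end PosDef

theorem sum_dotProduct_inv_mulVec_le_log_det_sub {T : ℕ} (A : ℕ → Matrix n n ℝ)
    (x : Fin T → n → ℝ) (hA : ∀ t : Fin T, (A t).PosDef)
    (hstep : ∀ t : Fin T, A (t + 1) = A t + vecMulVec (x t) (x t)) :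
    ∑ t, x t ⬝ᵥ (A (t + 1))⁻¹ *ᵥ x t ≤ Real.log (A T).det - Real.log (A 0).det := by
  calc ∑ t, x t ⬝ᵥ (A (t + 1))⁻¹ *ᵥ x t
      ≤ ∑ t : Fin T, (Real.log (A (t + 1)).det - Real.log (A t).det) :=
        Finset.sum_le_sum fun t _ => hstep t ▸ (hA t).dotProduct_inv_add_vecMulVec_self_mulVec_le _
    _ = Real.log (A T).det - Real.log (A 0).det := by
        rw [Fin.sum_univ_eq_sum_range (fun k => Real.log (A (k + 1)).det - Real.log (A k).det),
          Finset.sum_range_sub (fun k => Real.log (A k).det)]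

end Matrix

theorem Fin.sum_filter_val_lt_add_one {M : Type*} [AddCommMonoid M] {T : ℕ} (f : Fin T → M)
    (t : Fin T) :
    ∑ s with s.val < t.val + 1, f s = ∑ s with s.val < t.val, f s + f t := by
  have hfilter : Finset.univ.filter (fun s : Fin T => s.val < t.val + 1) =
      insert t (Finset.univ.filter fun s => s.val < t.val) := by
    ext s
    simp [Nat.le_iff_lt_or_eq, Fin.val_eq_val, or_comm]
  rw [hfilter, Finset.sum_insert (by simp), add_comm]

theorem stmt_7 {T d : ℕ} (x : Fin T → Fin d → ℝ) :
    ∑ t, x t ⬝ᵥ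
        (((∑ s ∈ Finset.univ.filter (fun s => s ≤ t), vecMulVec (x s) (x s))
            + (1 : Matrix (Fin d) (Fin d) ℝ))⁻¹ *ᵥ x t) ≤
      Real.log (((∑ s, vecMulVec (x s) (x s)) + (1 : Matrix (Fin d) (Fin d) ℝ)).det) := by
  let V : ℕ → Matrix (Fin d) (Fin d) ℝ := fun k => ∑ s with s.val < k, vecMulVec (x s) (x s) + 1
  have hV_succ (t : Fin T) : V (t + 1) = ∑ s with s ≤ t, vecMulVec (x s) (x s) + 1 := by
    simp only [V, Nat.lt_succ_iff, Fin.val_fin_le]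
  have hV_last : V T = ∑ s, vecMulVec (x s) (x s) + 1 := by
    simp only [V, Fin.is_lt, Finset.filter_true]
  have hV_zero : V 0 = 1 := by simp [V]
  have hsum := sum_dotProduct_inv_mulVec_le_log_det_sub V x
    (fun _ => posDef_sum_vecMulVec_self_add_one _ x)
    (fun t => by simp only [V, Fin.sum_filter_val_lt_add_one, add_right_comm])
  simpa [hV_succ, hV_last, hV_zero] using hsum
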